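/- arXiv:1703.00419 — 3 statements merged into one kernel-verified Lean document; each statement's English description precedes it below -/
import Mathlib

section
/- There exists a unique g* in the interval (4, 5) such that, with A*(g) = arccos(−1/g), one has A*(g*) + g*·sin(A*(g*)) = 2π; moreover g* ∈ (4.60, 4.61). -/
open Real

noncomputable def fbio (g : ℝ) : ℝ := Real.arccos (-1 / g) + Real.sqrt (g ^ 2 - 1)

lemma sqrt_aux {g : ℝ} (hg : 1 ≤ g) :
    Real.sqrt (1 - (-1 / g) ^ 2) = Real.sqrt (g ^ 2 - 1) / g := by
  have hg0 : (0 : ℝ) < g := by linarith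
  rw [show (1 : ℝ) - (-1 / g) ^ 2 = (g ^ 2 - 1) / g ^ 2 by field_simp,
    Real.sqrt_div (by nlinarith : (0:ℝ) ≤ g ^ 2 - 1), Real.sqrt_sq hg0.le]

lemma fbio_eq {g : ℝ} (hg : 1 ≤ g) :
    Real.arccos (-1 / g) + g * Real.sin (Real.arccos (-1 / g)) = fbio g := by
  have hg0 : (0 : ℝ) < g := by linarith
  rw [Real.sin_arccos, sqrt_aux hg, fbio, mul_div_cancel₀ _ hg0.ne']

lemma fbio_hasDeriv {g : ℝ} (hg : 1 < g) :
    HasDerivAt fbio (Real.sqrt (g ^ 2 - 1) / g) g := by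
  have hg0 : (0 : ℝ) < g := by linarith
  have hs0 : (0 : ℝ) < Real.sqrt (g ^ 2 - 1) := Real.sqrt_pos.2 (by nlinarith)
  have hs2 : Real.sqrt (g ^ 2 - 1) ^ 2 = g ^ 2 - 1 := Real.sq_sqrt (by nlinarith)
  have h1 : HasDerivAt (fun g : ℝ => -1 / g) ((g ^ 2)⁻¹) g := by
    have := (hasDerivAt_inv hg0.ne').fun_neg
    simpa [neg_div, one_div] using this
  have h2 : HasDerivAt (fun g : ℝ => Real.arccos (-1 / g))
      ((-(1 / Real.sqrt (1 - (-1 / g) ^ 2))) * (g ^ 2)⁻¹) g :=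
    (Real.hasDerivAt_arccos (by intro h; rw [div_eq_iff hg0.ne'] at h; nlinarith)
      (by intro h; rw [div_eq_iff hg0.ne'] at h; nlinarith)).comp g h1
  have h3 : HasDerivAt (fun g : ℝ => Real.sqrt (g ^ 2 - 1))
      ((1 / (2 * Real.sqrt (g ^ 2 - 1))) * (2 * g)) g := by
    have hin : HasDerivAt (fun g : ℝ => g ^ 2 - 1) (2 * g) g := by
      simpa using (hasDerivAt_pow 2 g).sub_const 1
    exact (Real.hasDerivAt_sqrt (by nlinarith)).comp g hin
  have := h2.fun_add h3
  refine this.congr_deriv ?_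
  symm
  rw [sqrt_aux hg.le]
  field_simp
  linear_combination hs2

lemma fbio_mono : StrictMonoOn fbio (Set.Icc (4 : ℝ) 5) := by
  apply strictMonoOn_of_deriv_pos (convex_Icc 4 5)
  · intro x hx
    exact (fbio_hasDeriv (by linarith [hx.1] : (1:ℝ) < x)).continuousAt.continuousWithinAt
  · intro x hx
    rw [interior_Icc] at hx
    rw [(fbio_hasDeriv (by linarith [hx.1] : (1:ℝ) < x)).deriv]
    have : (0:ℝ) < Real.sqrt (x ^ 2 - 1) := Real.sqrt_pos.2 (by nlinarith [hx.1])
    exact div_pos this (by linarith [hx.1])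

lemma fbio_lt : fbio 4.6 < 2 * π := by
  have hπl : 3.141592 < π := Real.pi_gt_d6
  have hπu : π < 3.141593 := Real.pi_lt_d6
  have hsl : (4.4899:ℝ) < Real.sqrt ((4.6:ℝ) ^ 2 - 1) := by
    rw [show ((4.6:ℝ)^2 - 1) = 20.16 by norm_num, Real.lt_sqrt (by norm_num)]; norm_num
  have hsu : Real.sqrt ((4.6:ℝ) ^ 2 - 1) < 4.49 := by
    rw [show ((4.6:ℝ)^2 - 1) = 20.16 by norm_num, Real.sqrt_lt' (by norm_num)]; norm_num
  rw [show fbio 4.6 = Real.arccos (-1 / 4.6) + Real.sqrt ((4.6:ℝ) ^ 2 - 1) from rfl]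
  set s := Real.sqrt ((4.6:ℝ) ^ 2 - 1) with hs
  clear_value s
  suffices key : Real.arccos (-1 / 4.6) < 2 * π - s by linarith
  have hmem1 : Real.arccos (-1/(4.6:ℝ)) ∈ Set.Icc 0 π :=
    ⟨Real.arccos_nonneg _, Real.arccos_le_pi _⟩
  have hmem2 : 2 * π - s ∈ Set.Icc (0:ℝ) π := ⟨by linarith, by linarith⟩
  rw [← Real.strictAntiOn_cos.lt_iff_gt hmem2 hmem1]
  rw [Real.cos_arccos (by norm_num) (by norm_num)]
  have h2 : Real.cos (2 * π - s) = Real.cos s := by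
    rw [Real.cos_sub]; simp
  have hid : Real.cos s = -Real.sin (π / 2 - s + π) := by
    rw [Real.sin_add_pi, Real.sin_pi_div_two_sub, neg_neg]
  rw [h2, hid]
  set t := π / 2 - s + π with ht
  have htl : (0.222388:ℝ) < t := by rw [ht]; linarith
  have htu : t < 0.22249 := by rw [ht]; linarith
  clear_value t
  have hb := Real.sin_bound (x := t) (by rw [abs_of_pos (by linarith)]; linarith)
  rw [abs_of_pos (by linarith : (0:ℝ) < t)] at hb
  have hb' : t - t ^ 3 / 6 - t ^ 4 * (5/96) ≤ Real.sin t := by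
    have h := abs_le.1 hb
    have h5 : t ^ 5 / 100 ≤ t ^ 4 * (5/96) := by
      have h4 : (0:ℝ) ≤ t ^ 4 := by positivity
      nlinarith [h4, htu, htl]
    linarith [h.1]
  have h0 : (0:ℝ) ≤ t := by linarith
  have h3 : t ^ 3 < 0.22249 ^ 3 := pow_lt_pow_left₀ htu h0 (by norm_num)
  have h4 : t ^ 4 < 0.22249 ^ 4 := pow_lt_pow_left₀ htu h0 (by norm_num)
  have : (1:ℝ)/4.6 < Real.sin t := by nlinarith
  linarith

lemma fbio_gt : 2 * π < fbio 4.61 := by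
  have hπl : 3.141592 < π := Real.pi_gt_d6
  have hπu : π < 3.141593 := Real.pi_lt_d6
  have hsl : (4.5002:ℝ) < Real.sqrt ((4.61:ℝ) ^ 2 - 1) := by
    rw [show ((4.61:ℝ)^2 - 1) = 20.2521 by norm_num, Real.lt_sqrt (by norm_num)]; norm_num
  have hsu : Real.sqrt ((4.61:ℝ) ^ 2 - 1) < 4.5003 := by
    rw [show ((4.61:ℝ)^2 - 1) = 20.2521 by norm_num, Real.sqrt_lt' (by norm_num)]; norm_num
  rw [show fbio 4.61 = Real.arccos (-1 / 4.61) + Real.sqrt ((4.61:ℝ) ^ 2 - 1) from rfl]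
  set s := Real.sqrt ((4.61:ℝ) ^ 2 - 1) with hs
  clear_value s
  suffices key : 2 * π - s < Real.arccos (-1 / 4.61) by linarith
  have hmem1 : Real.arccos (-1/(4.61:ℝ)) ∈ Set.Icc 0 π :=
    ⟨Real.arccos_nonneg _, Real.arccos_le_pi _⟩
  have hmem2 : 2 * π - s ∈ Set.Icc (0:ℝ) π := ⟨by linarith, by linarith⟩
  rw [← Real.strictAntiOn_cos.lt_iff_gt hmem1 hmem2]
  rw [Real.cos_arccos (by norm_num) (by norm_num)]
  have h2 : Real.cos (2 * π - s) = Real.cos s := by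
    rw [Real.cos_sub]; simp
  have hid : Real.cos s = -Real.sin (π / 2 - s + π) := by
    rw [Real.sin_add_pi, Real.sin_pi_div_two_sub, neg_neg]
  rw [h2, hid]
  set t := π / 2 - s + π with ht
  have htl : (0.212088:ℝ) < t := by rw [ht]; linarith
  have htu : t < 0.21219 := by rw [ht]; linarith
  clear_value t
  have hst : Real.sin t < t := Real.sin_lt (by linarith)
  have : Real.sin t < (1:ℝ)/4.61 := by linarith
  linarith

theorem process_bios_bifurcation_parameter :
    (∃! g : ℝ, g ∈ Set.Ioo (4 : ℝ) 5 ∧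
      Real.arccos (-1 / g) + g * Real.sin (Real.arccos (-1 / g)) = 2 * π) ∧
    (∀ g : ℝ, g ∈ Set.Ioo (4 : ℝ) 5 →
      Real.arccos (-1 / g) + g * Real.sin (Real.arccos (-1 / g)) = 2 * π →
      g ∈ Set.Ioo (4.60 : ℝ) 4.61) := by
  have hmono := fbio_mono
  have hcont : ContinuousOn fbio (Set.Icc (4.6:ℝ) 4.61) := fun x hx =>
    (fbio_hasDeriv (by linarith [hx.1] : (1:ℝ) < x)).continuousAt.continuousWithinAt
  have hIVT := intermediate_value_Ioo (by norm_num : (4.6:ℝ) ≤ 4.61) hcont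
  obtain ⟨g₀, hg₀mem, hg₀⟩ := hIVT ⟨fbio_lt, fbio_gt⟩
  obtain ⟨hg₀l, hg₀u⟩ := hg₀mem
  have hg₀45 : g₀ ∈ Set.Ioo (4:ℝ) 5 := ⟨by linarith, by linarith⟩
  constructor
  · refine ⟨g₀, ⟨hg₀45, ?_⟩, ?_⟩
    · rw [fbio_eq (by linarith : (1:ℝ) ≤ g₀)]; exact hg₀
    · rintro y ⟨hy45, hy⟩
      rw [fbio_eq (by linarith [hy45.1] : (1:ℝ) ≤ y)] at hy
      exact hmono.injOn (Set.mem_Icc.2 ⟨hy45.1.le, hy45.2.le⟩)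
        (Set.mem_Icc.2 ⟨by linarith, by linarith⟩) (hy.trans hg₀.symm)
  · intro g hg45 heq
    rw [fbio_eq (by linarith [hg45.1] : (1:ℝ) ≤ g)] at heq
    have hgIcc : g ∈ Set.Icc (4:ℝ) 5 := ⟨hg45.1.le, hg45.2.le⟩
    have e46 : ((4.60:ℝ)) = 4.6 := by norm_num
    constructor
    · rw [e46]
      by_contra h
      push_neg at h
      have h1 : fbio g ≤ fbio 4.6 := by
        rcases eq_or_lt_of_le h with he | hl
        · rw [he]
        · exact (hmono hgIcc (by constructor <;> norm_num) hl).le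
      have := fbio_lt
      linarith
    · by_contra h
      push_neg at h
      have h1 : fbio 4.61 ≤ fbio g := by
        rcases eq_or_lt_of_le h with he | hl
        · rw [he]
        · exact (hmono (by constructor <;> norm_num) hgIcc hl).le
      have := fbio_gt
      linarith
end

section
/- For g < g* (where g* satisfies arccos(−1/g*) + √(g*² − 1) = 2π) with g > 1, the process map f(A) = A + g·sin(A) maps the interval [0, 2π] into itself; for g > g*, there exists A ∈ (0, 2π) with f(A) > 2π. -/
open Real Set

private lemma deriv_h (gs x : ℝ) :
    deriv (fun A => A + gs * Real.sin A) x = 1 + gs * Real.cos x := by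
  have h : HasDerivAt (fun A => A + gs * Real.sin A) (1 + gs * Real.cos x) x :=
    (hasDerivAt_id x).add ((Real.hasDerivAt_sin x).const_mul gs)
  exact h.deriv

private lemma key_le (gs : ℝ) (hgs : 1 < gs)
    (heq : Real.arccos (-1 / gs) + Real.sqrt (gs ^ 2 - 1) = 2 * π) :
    ∀ A ∈ Set.Icc (0 : ℝ) (2 * π), A + gs * Real.sin A ≤ 2 * π := by
  have hgs0 : (0:ℝ) < gs := by linarith
  have hinv : (0:ℝ) < 1 / gs := by positivity
  have hinv1 : 1 / gs < 1 := by rw [div_lt_one hgs0]; linarith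
  have hx1 : (-1:ℝ) ≤ -1 / gs := by rw [neg_div]; linarith
  have hx2 : (-1:ℝ) / gs ≤ 1 := by rw [neg_div]; linarith
  set As := Real.arccos (-1 / gs) with hAs
  have hcosAs : Real.cos As = -1 / gs := Real.cos_arccos hx1 hx2
  have hAs0 : 0 ≤ As := Real.arccos_nonneg _
  have hAspi : As ≤ π := Real.arccos_le_pi _
  have hsinAs : gs * Real.sin As = Real.sqrt (gs ^ 2 - 1) := by
    rw [hAs, Real.sin_arccos,
      show (1 - (-1 / gs) ^ 2) = (gs ^ 2 - 1) / gs ^ 2 by field_simp,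
      Real.sqrt_div (by nlinarith : (0:ℝ) ≤ gs ^ 2 - 1), Real.sqrt_sq hgs0.le]
    field_simp
  have hvalAs : As + gs * Real.sin As = 2 * π := by rw [hsinAs]; exact heq
  have hcont : ContinuousOn (fun A => A + gs * Real.sin A) Set.univ :=
    (continuous_id.add (continuous_const.mul Real.continuous_sin)).continuousOn
  have hdiff : Differentiable ℝ (fun A => A + gs * Real.sin A) :=
    differentiable_id.add (Real.differentiable_sin.const_mul gs)
  have hpi : (0:ℝ) < π := Real.pi_pos
  -- monotone on [0, As]
  have hmono1 : MonotoneOn (fun A => A + gs * Real.sin A) (Set.Icc 0 As) := by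
    apply monotoneOn_of_deriv_nonneg (convex_Icc _ _) (hcont.mono (Set.subset_univ _))
      (hdiff.differentiableOn.mono interior_subset)
    intro x hx
    rw [interior_Icc] at hx
    rw [deriv_h]
    have h1 : Real.cos As ≤ Real.cos x :=
      Real.cos_le_cos_of_nonneg_of_le_pi hx.1.le hAspi hx.2.le
    rw [hcosAs] at h1
    have := mul_le_mul_of_nonneg_left h1 hgs0.le
    have : gs * (-1 / gs) = -1 := by field_simp
    nlinarith [mul_le_mul_of_nonneg_left h1 hgs0.le]
  -- antitone on [As, 2π - As]
  have hanti : AntitoneOn (fun A => A + gs * Real.sin A) (Set.Icc As (2 * π - As)) := by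
    apply antitoneOn_of_deriv_nonpos (convex_Icc _ _) (hcont.mono (Set.subset_univ _))
      (hdiff.differentiableOn.mono interior_subset)
    intro x hx
    rw [interior_Icc] at hx
    rw [deriv_h]
    have h1 : Real.cos x ≤ Real.cos As := by
      rcases le_or_gt x π with hxpi | hxpi
      · exact Real.cos_le_cos_of_nonneg_of_le_pi hAs0 hxpi hx.1.le
      · rw [show x = 2 * π - (2 * π - x) by ring, Real.cos_two_pi_sub]
        exact Real.cos_le_cos_of_nonneg_of_le_pi hAs0 (by linarith) (by linarith [hx.2])
    rw [hcosAs] at h1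
    have h2 : gs * (-1 / gs) = -1 := by field_simp
    nlinarith [mul_le_mul_of_nonneg_left h1 hgs0.le]
  -- monotone on [2π - As, 2π]
  have hmono2 : MonotoneOn (fun A => A + gs * Real.sin A) (Set.Icc (2 * π - As) (2 * π)) := by
    apply monotoneOn_of_deriv_nonneg (convex_Icc _ _) (hcont.mono (Set.subset_univ _))
      (hdiff.differentiableOn.mono interior_subset)
    intro x hx
    rw [interior_Icc] at hx
    rw [deriv_h]
    have h1 : Real.cos As ≤ Real.cos x := by
      rw [show x = 2 * π - (2 * π - x) by ring, Real.cos_two_pi_sub]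
      exact Real.cos_le_cos_of_nonneg_of_le_pi (by linarith [hx.2]) hAspi (by linarith [hx.1])
    rw [hcosAs] at h1
    have h2 : gs * (-1 / gs) = -1 := by field_simp
    nlinarith [mul_le_mul_of_nonneg_left h1 hgs0.le]
  intro A hA
  obtain ⟨hA0, hA2⟩ := hA
  rcases le_or_gt A As with h1 | h1
  · have := hmono1 ⟨hA0, h1⟩ ⟨hAs0, le_refl _⟩ h1
    simpa [hvalAs] using this
  · rcases le_or_gt A (2 * π - As) with h2 | h2
    · have := hanti ⟨le_refl _, by linarith⟩ ⟨h1.le, h2⟩ h1.le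
      simpa [hvalAs] using this
    · have := hmono2 ⟨h2.le, hA2⟩ ⟨by linarith, le_refl _⟩ hA2
      simpa [Real.sin_two_pi] using this

theorem process_interval_invariance_threshold (gs : ℝ) (hgs : 1 < gs)
    (heq : Real.arccos (-1 / gs) + Real.sqrt (gs ^ 2 - 1) = 2 * π) (g : ℝ) (hg : 1 < g) :
    (g < gs → ∀ A ∈ Set.Icc (0 : ℝ) (2 * π),
      A + g * Real.sin A ∈ Set.Icc (0 : ℝ) (2 * π)) ∧
    (gs < g → ∃ A ∈ Set.Ioo (0 : ℝ) (2 * π), A + g * Real.sin A > 2 * π) := by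
  have hpi : (0:ℝ) < π := Real.pi_pos
  have hgs0 : (0:ℝ) < gs := by linarith
  have hg0 : (0:ℝ) < g := by linarith
  constructor
  · intro hlt A hA
    obtain ⟨hA0, hA2⟩ := hA
    have key := key_le gs hgs heq
    constructor
    · rcases le_or_gt 0 (Real.sin A) with hs | hs
      · nlinarith
      · -- use B = 2π - A
        have hsB : Real.sin (2 * π - A) = -Real.sin A := by
          simp [Real.sin_sub, Real.sin_two_pi, Real.cos_two_pi]
        have hB := key (2 * π - A) ⟨by linarith, by linarith⟩
        rw [hsB] at hB
        have : g * (-Real.sin A) ≤ gs * (-Real.sin A) := by nlinarith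
        nlinarith
    · rcases le_or_gt 0 (Real.sin A) with hs | hs
      · have hB := key A ⟨hA0, hA2⟩
        nlinarith
      · nlinarith
  · intro hlt
    have hinv : (0:ℝ) < 1 / gs := by positivity
    have hx2 : (-1:ℝ) / gs < 1 := by rw [neg_div]; linarith
    refine ⟨Real.arccos (-1 / gs), ⟨Real.arccos_pos.2 hx2, lt_of_le_of_lt (Real.arccos_le_pi _) (by linarith)⟩, ?_⟩
    have hsinAs : gs * Real.sin (Real.arccos (-1 / gs)) = Real.sqrt (gs ^ 2 - 1) := by
      rw [Real.sin_arccos,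
        show (1 - (-1 / gs) ^ 2) = (gs ^ 2 - 1) / gs ^ 2 by field_simp,
        Real.sqrt_div (by nlinarith : (0:ℝ) ≤ gs ^ 2 - 1), Real.sqrt_sq hgs0.le]
      field_simp
    have hc : (0:ℝ) < Real.sqrt (gs ^ 2 - 1) := Real.sqrt_pos.2 (by nlinarith)
    have hs0 : 0 < Real.sin (Real.arccos (-1 / gs)) := by nlinarith
    nlinarith [mul_lt_mul_of_pos_right hlt hs0]
end

section
/- For 2 < g < π, the second iterate f² of the process map f(A) = A + g·sin(A) has a period-2 orbit in (0, 2π): there exist points p ≠ q in (0, 2π) with f(p) = q and f(q) = p. -/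
open Real

theorem process_period_two_orbit_exists (g : ℝ) (hg2 : 2 < g) (hgpi : g < π) :
    ∃ p q : ℝ, p ∈ Set.Ioo (0 : ℝ) (2 * π) ∧ q ∈ Set.Ioo (0 : ℝ) (2 * π) ∧ p ≠ q ∧
      (fun A : ℝ => A + g * Real.sin A) p = q ∧
      (fun A : ℝ => A + g * Real.sin A) q = p := by
  have hpi : (3 : ℝ) < π := Real.pi_gt_three
  have hpi4 : π < 4 := by linarith [Real.pi_lt_d2]
  have hg0 : (0 : ℝ) < g := by linarith
  set ε : ℝ := Real.sqrt (2 * (g - 2) / g) with hεdef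
  have hratpos : 0 < 2 * (g - 2) / g := div_pos (by linarith) hg0
  have hε0 : 0 < ε := Real.sqrt_pos.mpr hratpos
  have hεsq : ε ^ 2 = 2 * (g - 2) / g := Real.sq_sqrt (le_of_lt hratpos)
  have hεsq' : g * ε ^ 2 = 2 * (g - 2) := by
    rw [hεsq]; field_simp
  have hε1 : ε < 1 := by
    by_contra hc
    push_neg at hc
    have h2 : (1:ℝ) ≤ ε ^ 2 := by nlinarith [mul_self_nonneg (ε - 1)]
    have h1 : g * 1 ≤ g * ε ^ 2 := by nlinarith
    nlinarith
  -- the function whose root gives the orbit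
  set h : ℝ → ℝ := fun x => g * Real.sin x + 2 * x - 2 * π with hh
  have hcont : ContinuousOn h (Set.Icc (π / 2) (π - ε)) := by
    apply Continuous.continuousOn; fun_prop
  have hle : π / 2 ≤ π - ε := by linarith
  have hva : h (π / 2) < 0 := by
    simp only [hh, Real.sin_pi_div_two]
    linarith
  have hvb : 0 < h (π - ε) := by
    have hsin : Real.sin (π - ε) = Real.sin ε := Real.sin_pi_sub ε
    have hcube : ε - ε ^ 3 / 4 < Real.sin ε :=
      by have := Real.sin_gt_sub_cube hε0; linarith [pow_pos hε0 3]
    simp only [hh, hsin]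
    nlinarith [hcube, hεsq', hε0]
  have hiv := intermediate_value_Icc hle hcont
  have h0mem : (0 : ℝ) ∈ Set.Icc (h (π / 2)) (h (π - ε)) :=
    ⟨le_of_lt hva, le_of_lt hvb⟩
  obtain ⟨p, hpmem, hp0⟩ := hiv h0mem
  obtain ⟨hp1, hp2⟩ := hpmem
  have hkey : g * Real.sin p = 2 * π - 2 * p := by
    have : g * Real.sin p + 2 * p - 2 * π = 0 := hp0
    linarith
  refine ⟨p, 2 * π - p, ⟨by linarith, by linarith⟩, ⟨by linarith, by linarith⟩,
    by intro hpq; linarith, ?_, ?_⟩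
  · simp only
    linarith
  · simp only
    have hsin : Real.sin (2 * π - p) = -Real.sin p := by
      rw [Real.sin_sub]
      simp [Real.sin_two_pi, Real.cos_two_pi]
    rw [hsin]
    nlinarith [hkey]
end
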